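/- arXiv:2512.05228 — 3 statements merged into one kernel-verified Lean document; each statement's English description precedes it below -/
import Mathlib

section
/- Let k be a commutative unital ring, I a finite set, and consider the Laurent polynomial ring L = k[x_i^{±1} : i ∈ I]. For any c ∈ k and any nonzero vector m ∈ ℤ^I, the element 1 + c·x^m (where x^m denotes the Laurent monomial ∏_i x_i^{m_i}) is a regular element of L, i.e., not a zero divisor. -/
/-!
Grade `ℤ^I` by a coordinate `i` with `m i ≠ 0`, replacing it by its negative if needed so that
`m` has positive degree. If `(1 + c·x^m) * f = 0` with `f ≠ 0`, look at a monomial `x^a` of `f`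
of least degree: the coefficient of `x^a` in the product is `f a + c * f (a - m)`, and
`f (a - m) = 0` because `a - m` has smaller degree, so `f a = 0`, a contradiction.
-/

namespace AddMonoidAlgebra

variable {k G Γ : Type*}

theorem eq_zero_of_one_add_single_mul_eq_zero [Semiring k] [AddGroup G]
    [AddCommMonoid Γ] [LinearOrder Γ] [IsOrderedCancelAddMonoid Γ]
    (φ : G →+ Γ) {m : G} (hm : 0 < φ m) (c : k) {f : AddMonoidAlgebra k G}
    (hf : (1 + single m c) * f = 0) : f = 0 := by
  by_contra hne
  have hsupp : f.coeff.support.Nonempty :=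
    Finsupp.support_nonempty_iff.mpr (by simpa using hne)
  obtain ⟨a, ha, hmin⟩ := f.coeff.support.exists_min_image φ hsupp
  have hlower : f.coeff (-m + a) = 0 := by
    refine Finsupp.notMem_support_iff.mp fun hmem => (hmin _ hmem).not_gt ?_
    have : φ (-m + a) + φ m = φ a := by
      rw [map_add, add_right_comm, ← map_add, neg_add_cancel, map_zero, zero_add]
    exact this ▸ lt_add_of_pos_right _ hm
  have hcoeff : f.coeff a + c * f.coeff (-m + a) = 0 := by
    simpa [add_mul] using congrArg (fun g => g.coeff a) hf
  rw [hlower, mul_zero, add_zero] at hcoeff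
  exact Finsupp.mem_support_iff.mp ha hcoeff

theorem isRegular_one_add_single [CommRing k] [AddCommGroup G]
    [AddCommGroup Γ] [LinearOrder Γ] [IsOrderedAddMonoid Γ]
    (φ : G →+ Γ) {m : G} (hm : φ m ≠ 0) (c : k) :
    IsRegular (1 + single m c : AddMonoidAlgebra k G) := by
  refine (Commute.isRegular_iff (Commute.all _)).mpr
    (isLeftRegular_iff_right_eq_zero_of_mul.mpr fun f hf => ?_)
  rcases hm.lt_or_gt with hneg | hpos
  · exact eq_zero_of_one_add_single_mul_eq_zero (-φ) (neg_pos.mpr hneg) c hf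
  · exact eq_zero_of_one_add_single_mul_eq_zero φ hpos c hf

end AddMonoidAlgebra

theorem stmt0_general {k : Type*} [CommRing k] {I : Type*}
    (c : k) (m : I → ℤ) (hm : m ≠ 0) :
    IsRegular ((1 : AddMonoidAlgebra k (I → ℤ)) + AddMonoidAlgebra.single m c) := by
  obtain ⟨i, hi⟩ := Function.ne_iff.mp hm
  exact AddMonoidAlgebra.isRegular_one_add_single (Pi.evalAddMonoidHom (fun _ => ℤ) i) hi c

/-- For a commutative unital ring `k`, a finite set `I`, and the Laurent
polynomial ring `L = k[x_i^{±1} : i ∈ I]` (modelled as the group algebra of `ℤ^I` over `k`),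
for any `c ∈ k` and any nonzero `m ∈ ℤ^I`, the element `1 + c·x^m` is a regular element
of `L`, i.e. not a zero divisor. -/
theorem stmt0 {k : Type*} [CommRing k] {I : Type*} [Fintype I]
    (c : k) (m : I → ℤ) (hm : m ≠ 0) :
    IsRegular ((1 : AddMonoidAlgebra k (I → ℤ)) + AddMonoidAlgebra.single m c) :=
  stmt0_general c m hm
end

section
/- Localization intersection in a commutative domain: let R be a commutative integral domain with fraction field K, let (p_j)_{j∈J} be a family of prime elements of R, and let S ⊆ R be a multiplicative subset such that no p_j divides any element of S. Then, inside K, the intersection of the localization R[p_j^{-1} : j ∈ J] (localization at the multiplicative set generated by all p_j) and the localization S^{-1}R equals R. -/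
/-!
If `t x` and `s x` both lie in `R`, then `t r' = s r` in `R`, so `t ∣ s r`. A product of primes
none of which divides `s` can be cancelled against `s` one prime at a time, hence `t ∣ r`, and
`x = r / t` lies in `R`.
-/

theorem dvd_of_dvd_mul_left_of_mem_closure {M : Type*} [CommMonoidWithZero M]
    [IsCancelMulZero M] {P : Set M} {s : M} (hP : ∀ p ∈ P, ∀ r, p ∣ s * r → p ∣ r)
    {t : M} (ht : t ∈ Submonoid.closure P) : ∀ r, t ∣ s * r → t ∣ r := by
  induction ht using Submonoid.closure_induction with
  | mem p hp => exact hP p hp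
  | one => exact fun r _ => one_dvd r
  | mul a b _ _ hA hB =>
    intro r h
    rcases eq_or_ne a 0 with rfl | ha
    · rw [zero_mul] at h ⊢
      exact hA r h
    obtain ⟨c, rfl⟩ := hA r (dvd_of_mul_right_dvd h)
    rw [mul_left_comm] at h
    exact mul_dvd_mul_left a (hB c ((mul_dvd_mul_iff_left ha).1 h))

theorem mem_range_algebraMap_of_mul_eq {R K : Type*} [CommRing R] [CommRing K] [IsDomain K]
    [Algebra R K] [FaithfulSMul R K] {x : K} {t s r r' : R} (ht : t ≠ 0)
    (hts : ∀ a, t ∣ s * a → t ∣ a)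
    (htx : algebraMap R K t * x = algebraMap R K r)
    (hsx : algebraMap R K s * x = algebraMap R K r') :
    x ∈ Set.range (algebraMap R K) := by
  have hinj := FaithfulSMul.algebraMap_injective R K
  have hrr' : s * r = t * r' := hinj <| by
    simp only [map_mul, ← htx, ← hsx]
    ring
  obtain ⟨c, rfl⟩ := hts r ⟨r', hrr'⟩
  refine ⟨c, mul_left_cancel₀ ((map_ne_zero_iff _ hinj).2 ht) ?_⟩
  rw [htx, map_mul]

/-- Localization intersection in a commutative domain. Let `R` be a commutative
integral domain with fraction field `K`, `(p_j)_{j∈J}` a family of prime elements of `R`,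
and `S ⊆ R` a multiplicative subset such that no `p_j` divides any element of `S`. Then,
inside `K`, the intersection of the localization `R[p_j^{-1} : j ∈ J]` (localization at the
multiplicative set generated by the `p_j`) and the localization `S^{-1}R` equals `R`. -/
theorem stmt7 {R : Type*} [CommRing R] [IsDomain R]
    {J : Type*} (p : J → R) (hp : ∀ j, Prime (p j))
    (S : Submonoid R) (hS : ∀ s ∈ S, ∀ j, ¬ p j ∣ s) :
    {x : FractionRing R |
        (∃ r : R, ∃ t ∈ Submonoid.closure (Set.range p),
          algebraMap R (FractionRing R) t * x = algebraMap R (FractionRing R) r) ∧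
        (∃ r : R, ∃ s ∈ S,
          algebraMap R (FractionRing R) s * x = algebraMap R (FractionRing R) r)} =
      Set.range (algebraMap R (FractionRing R)) := by
  ext x
  constructor
  · rintro ⟨⟨r, t, ht, htx⟩, ⟨r', s, hs, hsx⟩⟩
    have ht0 : t ≠ 0 := nonZeroDivisors.ne_zero <| Submonoid.closure_le.2
      (Set.range_subset_iff.2 fun j => mem_nonZeroDivisors_of_ne_zero (hp j).ne_zero) ht
    refine mem_range_algebraMap_of_mul_eq ht0 ?_ htx hsx
    refine dvd_of_dvd_mul_left_of_mem_closure ?_ ht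
    rintro _ ⟨j, rfl⟩ a h
    exact ((hp j).dvd_or_dvd h).resolve_left (hS s hs j)
  · rintro ⟨r, rfl⟩
    exact ⟨⟨r, 1, one_mem _, by simp⟩, ⟨r, 1, one_mem _, by simp⟩⟩
end

section
/- Existence of a maximal nonzero decomposition of a root: let Φ be the root system of a complex simple Lie algebra with highest root θ, and set W = Φ ∪ {0} (the set of weights of the adjoint representation). For β ∈ Φ with β ≠ θ and β ≠ -θ, define Ψ(β) = {(β₁, β₂) ∈ W × W : β₁ + β₂ = β}. Then there exists (β₁°, β₂°) ∈ Ψ(β) such that (i) for every (β₁, β₂) ∈ Ψ(β) with (β₁, β₂) ≠ (β₁°, β₂°), β₁° is not ≤ β₁ in the dominance order, and (ii) β₁° ≠ 0 and β₂° ≠ 0. -/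
open scoped RealInnerProductSpace

/-- A (finite, crystallographic, reduced) root system in a real inner product space `V`:
a finite set `Φ` of nonzero vectors spanning `V`, stable under the associated reflections,
with integral Cartan numbers, and such that the only multiples of a root `α` that are roots
are `±α`. -/
structure RootSystemData (V : Type*) [NormedAddCommGroup V] [InnerProductSpace ℝ V] where
  Φ : Finset V
  zero_not_mem : (0 : V) ∉ Φ
  spanning : Submodule.span ℝ (Φ : Set V) = ⊤
  reflect_mem : ∀ α ∈ Φ, ∀ β ∈ Φ, β - (2 * ⟪α, β⟫ / ⟪α, α⟫) • α ∈ Φ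
  crystallographic : ∀ α ∈ Φ, ∀ β ∈ Φ, ∃ n : ℤ, (n : ℝ) = 2 * ⟪α, β⟫ / ⟪α, α⟫
  reduced : ∀ α ∈ Φ, ∀ t : ℝ, t • α ∈ Φ → t = 1 ∨ t = -1

variable {V : Type*} [NormedAddCommGroup V] [InnerProductSpace ℝ V]

/-- `Φ` is irreducible: nonempty and not a disjoint union of two nonempty mutually
orthogonal subsets. -/
def RootSystemData.IsIrreducible (R : RootSystemData V) : Prop :=
  R.Φ.Nonempty ∧
    ∀ S ⊆ R.Φ, (∀ α ∈ S, ∀ β ∈ R.Φ, β ∉ S → ⟪α, β⟫ = 0) → S = ∅ ∨ S = R.Φ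

/-- `Pi` is a base (set of simple roots) of the root system: a linearly independent subset
of `Φ` such that every root is a nonnegative integral or nonpositive integral combination
of elements of `Pi`. -/
def RootSystemData.IsBase (R : RootSystemData V) (Pi : Finset V) : Prop :=
  (Pi : Set V) ⊆ (R.Φ : Set V) ∧
    LinearIndependent ℝ (fun a : Pi => (a : V)) ∧
    ∀ β ∈ R.Φ,
      (∃ c : V → ℕ, β = ∑ α ∈ Pi, (c α : ℝ) • α) ∨
      (∃ c : V → ℕ, β = -(∑ α ∈ Pi, (c α : ℝ) • α))

/-- `β` is a positive root with respect to the base `Pi`. -/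
def RootSystemData.IsPositive (R : RootSystemData V) (Pi : Finset V) (β : V) : Prop :=
  β ∈ R.Φ ∧ ∃ c : V → ℕ, β = ∑ α ∈ Pi, (c α : ℝ) • α

/-- `θ` is the highest root with respect to the base `Pi`: a root such that `θ - β` is a
nonnegative integral combination of simple roots for every root `β`. -/
def RootSystemData.IsHighest (R : RootSystemData V) (Pi : Finset V) (θ : V) : Prop :=
  θ ∈ R.Φ ∧ ∀ β ∈ R.Φ, ∃ c : V → ℕ, θ - β = ∑ α ∈ Pi, (c α : ℝ) • α

/-!
Write `Q⁺` for the monoid of nonnegative integral combinations of simple roots and measure it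
with a height functional, equal to `1` on every simple root. If `β` is a positive root
other than `θ`, some `β + α` with `α` simple is a root: otherwise `⟪β, α⟫ ≥ 0` for all simple
`α`, hence `⟪β, θ⟫ > 0` and `θ - β` is a positive root with `β + (θ - β)` a root, and peeling
simple roots off `θ - β` one at a time (which keeps `β + (θ - β)` a root) ends at a simple
`α` with `β + α` a root. The decomposition `(β + α, -α)` (or `(α, β - α)` for negative `β`,
using `-β`) has a first component lying neither below `0` nor below `β`. Among the
decompositions whose first component dominates it, one of maximal height is the required
maximal one, and both of its components are roots since its first component is neither `0`
nor `β`.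
-/

theorem AddSubmonoid.mem_closure_finset_iff_exists_natCast_smul {K M : Type*} [Semiring K]
    [AddCommMonoid M] [Module K M] {s : Finset M} {x : M} :
    x ∈ AddSubmonoid.closure (s : Set M) ↔ ∃ c : M → ℕ, x = ∑ α ∈ s, (c α : K) • α := by
  classical
  constructor
  · intro hx
    induction hx using AddSubmonoid.closure_induction with
    | mem α hα => exact ⟨Pi.single α 1, by simp [Pi.single_apply, Finset.mem_coe.1 hα]⟩
    | zero => exact ⟨0, by simp⟩
    | add x y _ _ hx hy =>
      obtain ⟨c, rfl⟩ := hx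
      obtain ⟨d, rfl⟩ := hy
      exact ⟨c + d, by simp [add_smul, Finset.sum_add_distrib]⟩
  · rintro ⟨c, rfl⟩
    refine AddSubmonoid.sum_mem _ fun α hα => ?_
    rw [Nat.cast_smul_eq_nsmul]
    exact AddSubmonoid.nsmul_mem _ (AddSubmonoid.subset_closure hα) _

theorem LinearIndepOn.exists_linearMap_eq_one {K M : Type*} [DivisionRing K] [AddCommGroup M]
    [Module K M] {s : Set M} (hs : LinearIndepOn K id s) :
    ∃ f : M →ₗ[K] K, ∀ α ∈ s, f α = 1 := by
  let B := Module.Basis.extend hs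
  refine ⟨B.sumCoords, fun α hα => ?_⟩
  have h := B.sumCoords_self_apply (i := ⟨α, hs.subset_extend _ hα⟩)
  rwa [Module.Basis.extend_apply_self] at h

section Height

variable {M : Type*} [AddCommGroup M] [Module ℝ M] {s : Set M} {f : M →ₗ[ℝ] ℝ}

theorem eq_zero_or_one_le_of_mem_closure (hf : ∀ α ∈ s, f α = 1) {v : M}
    (hv : v ∈ AddSubmonoid.closure s) : v = 0 ∨ 1 ≤ f v := by
  induction hv using AddSubmonoid.closure_induction with
  | mem α hα => exact Or.inr (hf α hα).ge
  | zero => exact Or.inl rfl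
  | add x y _ _ hx hy =>
    rcases hx with rfl | hx
    · simpa using hy
    rcases hy with rfl | hy
    · simpa using Or.inr hx
    right
    rw [map_add]
    linarith

theorem neg_notMem_closure (hf : ∀ α ∈ s, f α = 1) {α : M} (hα : α ∈ s) :
    -α ∉ AddSubmonoid.closure s := fun h => by
  rcases eq_zero_or_one_le_of_mem_closure hf h with h | h
  · simpa [neg_eq_zero.1 h] using hf α hα
  · rw [map_neg, hf α hα] at h
    linarith

theorem eq_zero_or_eq_zero_of_add_mem (hf : ∀ α ∈ s, f α = 1) {x y : M}
    (hx : x ∈ AddSubmonoid.closure s) (hy : y ∈ AddSubmonoid.closure s) (hxy : x + y ∈ s) :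
    x = 0 ∨ y = 0 := by
  rcases eq_zero_or_one_le_of_mem_closure hf hx with hx | hx
  · exact Or.inl hx
  rcases eq_zero_or_one_le_of_mem_closure hf hy with hy | hy
  · exact Or.inr hy
  have := hf _ hxy
  rw [map_add] at this
  linarith

theorem exists_maximal_of_sub_mem_closure (hf : ∀ α ∈ s, f α = 1) {S : Finset M} {p : M}
    (hp : p ∈ S) : ∃ g ∈ S, g - p ∈ AddSubmonoid.closure s ∧
      ∀ q ∈ S, q - g ∈ AddSubmonoid.closure s → q = g := by
  classical
  obtain ⟨g, hg, hmax⟩ := (S.filter (fun q => q - p ∈ AddSubmonoid.closure s)).exists_max_image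
    f ⟨p, by simp [hp]⟩
  rw [Finset.mem_filter] at hg
  refine ⟨g, hg.1, hg.2, fun q hq hqg => ?_⟩
  have hqp : q - p ∈ AddSubmonoid.closure s := by
    simpa using add_mem hqg hg.2
  have hfq := hmax q (Finset.mem_filter.2 ⟨hq, hqp⟩)
  rcases eq_zero_or_one_le_of_mem_closure hf hqg with h | h
  · exact sub_eq_zero.1 h
  · rw [map_sub] at h
    linarith

end Height

section Inner

variable {E : Type*} [NormedAddCommGroup E] [InnerProductSpace ℝ E] {s : Set E}

theorem inner_nonneg_of_mem_closure {u v : E} (h : ∀ α ∈ s, 0 ≤ ⟪u, α⟫)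
    (hv : v ∈ AddSubmonoid.closure s) : 0 ≤ ⟪u, v⟫ := by
  induction hv using AddSubmonoid.closure_induction with
  | mem α hα => exact h α hα
  | zero => simp
  | add x y _ _ hx hy =>
    rw [inner_add_right]
    linarith

theorem exists_inner_pos_of_mem_closure {γ : E} (hγ : γ ∈ AddSubmonoid.closure s)
    (h0 : γ ≠ 0) : ∃ α ∈ s, 0 < ⟪γ, α⟫ := by
  by_contra! h
  have := inner_nonneg_of_mem_closure (u := -γ) (fun α hα => by simpa using h α hα) hγ
  exact h0 (real_inner_self_nonpos.1 (by simpa using this))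

end Inner

namespace RootSystemData

variable (R : RootSystemData V) {a b : V}

theorem ne_zero_of_mem (ha : a ∈ R.Φ) : a ≠ 0 :=
  fun h => R.zero_not_mem (h ▸ ha)

theorem inner_self_pos (ha : a ∈ R.Φ) : 0 < ⟪a, a⟫ :=
  real_inner_self_pos.2 (R.ne_zero_of_mem ha)

theorem neg_mem (ha : a ∈ R.Φ) : -a ∈ R.Φ := by
  have h := R.reflect_mem a ha a ha
  rwa [mul_div_assoc, div_self (R.inner_self_pos ha).ne', mul_one, two_smul,
    sub_add_cancel_left] at h

theorem add_mem_of_inner_neg (ha : a ∈ R.Φ) (hb : b ∈ R.Φ) (hab : ⟪a, b⟫ < 0) (hba : b ≠ -a) :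
    a + b ∈ R.Φ := by
  obtain ⟨n, hn⟩ := R.crystallographic a ha b hb
  obtain ⟨m, hm⟩ := R.crystallographic b hb a ha
  have haa := R.inner_self_pos ha
  have hbb := R.inner_self_pos hb
  by_cases hn1 : n = -1
  · have h := R.reflect_mem a ha b hb
    rwa [← hn, hn1, Int.cast_neg, Int.cast_one, neg_one_smul, sub_neg_eq_add, add_comm] at h
  by_cases hm1 : m = -1
  · have h := R.reflect_mem b hb a ha
    rwa [← hm, hm1, Int.cast_neg, Int.cast_one, neg_one_smul, sub_neg_eq_add] at h
  rw [real_inner_comm, eq_div_iff hbb.ne'] at hm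
  rw [eq_div_iff haa.ne'] at hn
  have hn0 : n < 0 := by
    have : (n : ℝ) < 0 := by nlinarith
    exact_mod_cast this
  have hm0 : m < 0 := by
    have : (m : ℝ) < 0 := by nlinarith
    exact_mod_cast this
  have hn2 : (n : ℝ) ≤ -2 := by exact_mod_cast (show n ≤ -2 by omega)
  have hm2 : (m : ℝ) ≤ -2 := by exact_mod_cast (show m ≤ -2 by omega)
  -- With both Cartan numbers `≤ -2`, Cauchy–Schwarz forces `⟪a, b⟫ = -‖a‖² = -‖b‖²`.
  have hcs := real_inner_mul_inner_self_le a b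
  have hab' : ⟪a, b⟫ = -⟪a, a⟫ := by nlinarith
  have hab'' : ⟪a, b⟫ = -⟪b, b⟫ := by nlinarith
  refine absurd (eq_neg_of_add_eq_zero_right (real_inner_self_nonpos.1 ?_)) hba
  rw [real_inner_add_add_self]
  linarith

theorem sub_mem_of_inner_pos (ha : a ∈ R.Φ) (hb : b ∈ R.Φ) (hab : 0 < ⟪a, b⟫) (hne : a ≠ b) :
    a - b ∈ R.Φ := by
  rw [sub_eq_add_neg]
  exact R.add_mem_of_inner_neg ha (R.neg_mem hb) (by rwa [inner_neg_right, neg_neg_iff_pos])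
    (fun h => hne (neg_injective h).symm)

variable {R} {Pi : Finset V}

theorem IsBase.exists_height (hPi : R.IsBase Pi) : ∃ f : V →ₗ[ℝ] ℝ, ∀ α ∈ Pi, f α = 1 :=
  LinearIndepOn.exists_linearMap_eq_one hPi.2.1

theorem IsBase.mem_closure_or_neg_mem_closure (hPi : R.IsBase Pi) {β : V} (hβ : β ∈ R.Φ) :
    β ∈ AddSubmonoid.closure (Pi : Set V) ∨ -β ∈ AddSubmonoid.closure (Pi : Set V) := by
  simp only [AddSubmonoid.mem_closure_finset_iff_exists_natCast_smul (K := ℝ)]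
  rcases hPi.2.2 β hβ with h | ⟨c, hc⟩
  · exact Or.inl h
  · exact Or.inr ⟨c, by rw [hc, neg_neg]⟩

theorem IsBase.neg_notMem_closure (hPi : R.IsBase Pi) {α : V} (hα : α ∈ Pi) : -α ∉ AddSubmonoid.closure (Pi : Set V) :=
  have ⟨_, hf⟩ := hPi.exists_height
  _root_.neg_notMem_closure hf hα

theorem IsBase.sub_mem_closure (hPi : R.IsBase Pi) {γ α : V} (hγ : γ ∈ R.Φ) (hγpos : γ ∈ AddSubmonoid.closure (Pi : Set V))
    (hα : α ∈ Pi) (hγα : γ ≠ α) (hsub : γ - α ∈ R.Φ) : γ - α ∈ AddSubmonoid.closure (Pi : Set V) := by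
  obtain ⟨f, hf⟩ := hPi.exists_height
  refine (hPi.mem_closure_or_neg_mem_closure hsub).resolve_right fun h => ?_
  rcases eq_zero_or_eq_zero_of_add_mem hf hγpos h (by simpa using hα) with h | h
  · exact R.ne_zero_of_mem hγ h
  · exact hγα (by simpa [sub_eq_zero, eq_comm] using h)

theorem IsBase.inner_nonneg_of_forall_add_notMem (hPi : R.IsBase Pi) {β : V}
    (hβ : β ∈ R.Φ) (hβpos : β ∈ AddSubmonoid.closure (Pi : Set V)) (hnot : ∀ α ∈ Pi, β + α ∉ R.Φ) {α : V} (hα : α ∈ Pi) :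
    0 ≤ ⟪β, α⟫ := by
  by_contra! h
  refine hnot α hα (R.add_mem_of_inner_neg hβ (hPi.1 hα) h fun hαβ => ?_)
  exact hPi.neg_notMem_closure hα (by rwa [hαβ, neg_neg])

theorem IsBase.add_notMem_of_forall_add_notMem (hPi : R.IsBase Pi) {β : V} (hβ : β ∈ R.Φ)
    (hβpos : β ∈ AddSubmonoid.closure (Pi : Set V)) (hnot : ∀ α ∈ Pi, β + α ∉ R.Φ) {γ : V} (hγ : γ ∈ R.Φ) (hγpos : γ ∈ AddSubmonoid.closure (Pi : Set V)) :
    β + γ ∉ R.Φ := by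
  obtain ⟨f, hf⟩ := hPi.exists_height
  suffices ∀ n : ℕ, ∀ γ ∈ R.Φ, γ ∈ AddSubmonoid.closure (Pi : Set V) → f γ ≤ n → β + γ ∉ R.Φ from
    this _ γ hγ hγpos (Nat.le_ceil _)
  intro n
  induction n with
  | zero =>
    intro γ hγ hγpos hfγ _
    rcases eq_zero_or_one_le_of_mem_closure hf hγpos with h | h
    · exact R.ne_zero_of_mem hγ h
    · push_cast at hfγ
      linarith
  | succ n ih =>
    intro γ hγ hγpos hfγ hβγ
    by_cases hγPi : γ ∈ Pi
    · exact hnot γ hγPi hβγ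
    obtain ⟨α, hα, hγα⟩ := exists_inner_pos_of_mem_closure hγpos (R.ne_zero_of_mem hγ)
    have hne : γ ≠ α := fun h => hγPi (h ▸ hα)
    have hβγα : β + γ ≠ α := fun h => by
      rcases eq_zero_or_eq_zero_of_add_mem hf hβpos hγpos (h ▸ hα) with h | h
      · exact R.ne_zero_of_mem hβ h
      · exact R.ne_zero_of_mem hγ h
    have hsub := R.sub_mem_of_inner_pos hγ (hPi.1 hα) hγα hne
    have hβsub : β + γ - α ∈ R.Φ := R.sub_mem_of_inner_pos hβγ (hPi.1 hα)
      (by rw [inner_add_left]; linarith [hPi.inner_nonneg_of_forall_add_notMem hβ hβpos hnot hα])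
      hβγα
    refine ih (γ - α) hsub (hPi.sub_mem_closure hγ hγpos hα hne hsub) ?_
      (by rwa [← add_sub_assoc])
    rw [map_sub, hf α hα]
    push_cast at hfγ
    linarith

theorem IsBase.exists_add_mem (hPi : R.IsBase Pi) {θ : V} (hθ : R.IsHighest Pi θ) {β : V}
    (hβ : β ∈ R.Φ) (hβpos : β ∈ AddSubmonoid.closure (Pi : Set V)) (hβθ : β ≠ θ) : ∃ α ∈ Pi, β + α ∈ R.Φ := by
  by_contra! hnot
  have hθβ : θ - β ∈ AddSubmonoid.closure (Pi : Set V) :=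
    (AddSubmonoid.mem_closure_finset_iff_exists_natCast_smul (K := ℝ)).2 (hθ.2 β hβ)
  have hpos : 0 < ⟪θ, β⟫ := by
    have := inner_nonneg_of_mem_closure
      (fun α hα => hPi.inner_nonneg_of_forall_add_notMem hβ hβpos hnot hα) hθβ
    rw [inner_sub_right, real_inner_comm] at this
    linarith [R.inner_self_pos hβ]
  have hsub := R.sub_mem_of_inner_pos hθ.1 hβ hpos hβθ.symm
  exact hPi.add_notMem_of_forall_add_notMem hβ hβpos hnot hsub hθβ (by simpa using hθ.1)

theorem IsBase.exists_decomposition (hPi : R.IsBase Pi) {θ : V} (hθ : R.IsHighest Pi θ)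
    {β : V} (hβ : β ∈ R.Φ) (hβθ : β ≠ θ) (hβθ' : β ≠ -θ) :
    ∃ p ∈ R.Φ, β - p ∈ R.Φ ∧ -p ∉ AddSubmonoid.closure (Pi : Set V) ∧ β - p ∉ AddSubmonoid.closure (Pi : Set V) := by
  rcases hPi.mem_closure_or_neg_mem_closure hβ with hpos | hneg
  · obtain ⟨α, hα, hβα⟩ := hPi.exists_add_mem hθ hβ hpos hβθ
    refine ⟨β + α, hβα, by simpa using R.neg_mem (hPi.1 hα), fun h => ?_,
      by simpa using hPi.neg_notMem_closure hα⟩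
    exact hPi.neg_notMem_closure hα (by simpa using add_mem h hpos)
  · obtain ⟨α, hα, hβα⟩ := hPi.exists_add_mem hθ (R.neg_mem hβ) hneg
      (fun h => hβθ' (by rw [← h, neg_neg]))
    refine ⟨α, hPi.1 hα, by simpa [sub_eq_neg_add] using R.neg_mem hβα,
      hPi.neg_notMem_closure hα, fun h => ?_⟩
    exact hPi.neg_notMem_closure hα (by simpa [sub_add_eq_add_sub] using add_mem h hneg)

end RootSystemData

theorem stmt11_general (R : RootSystemData V)
    (Pi : Finset V) (hPi : R.IsBase Pi)
    (θ : V) (hθ : R.IsHighest Pi θ)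
    (β : V) (hβ : β ∈ R.Φ) (hβθ : β ≠ θ) (hβθ' : β ≠ -θ) :
    ∃ β₁ β₂ : V, β₁ ∈ R.Φ ∧ β₂ ∈ R.Φ ∧ β₁ + β₂ = β ∧
      ∀ γ₁ γ₂ : V, (γ₁ = 0 ∨ γ₁ ∈ R.Φ) → (γ₂ = 0 ∨ γ₂ ∈ R.Φ) → γ₁ + γ₂ = β →
        (γ₁, γ₂) ≠ (β₁, β₂) →
        ¬ ∃ c : V → ℕ, γ₁ - β₁ = ∑ α ∈ Pi, (c α : ℝ) • α := by
  classical
  obtain ⟨f, hf⟩ := hPi.exists_height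
  obtain ⟨p, hp, hβp, hp0, hpβ⟩ := hPi.exists_decomposition hθ hβ hβθ hβθ'
  let W : Finset V := insert 0 R.Φ
  obtain ⟨g, hgS, hpg, hgmax⟩ := exists_maximal_of_sub_mem_closure hf
    (S := W.filter fun γ => β - γ ∈ W) (p := p) (by simp [W, hp, hβp])
  have hg0 : g ≠ 0 := by
    rintro rfl
    exact hp0 (by simpa using hpg)
  have hβg : β - g ≠ 0 := fun h => hpβ (sub_eq_zero.1 h ▸ hpg)
  simp only [W, Finset.mem_filter, Finset.mem_insert] at hgS
  refine ⟨g, β - g, hgS.1.resolve_left hg0, hgS.2.resolve_left hβg, add_sub_cancel _ _, ?_⟩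
  rintro γ₁ γ₂ h₁ h₂ hsum hne hle
  obtain rfl : γ₂ = β - γ₁ := eq_sub_of_add_eq' hsum
  have hγg := hgmax γ₁ (by simp [W, h₁, h₂])
    ((AddSubmonoid.mem_closure_finset_iff_exists_natCast_smul (K := ℝ)).2 hle)
  exact hne (by rw [hγg])

/-- Existence of a maximal nonzero decomposition of a root. Let `Φ` be the
root system of a complex simple Lie algebra (an irreducible crystallographic reduced root
system) with base `Pi` and highest root `θ`, and let `W = Φ ∪ {0}` be the set of weights
of the adjoint representation. For every root `β` with `β ≠ θ` and `β ≠ -θ` there exists a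
pair `(β₁°, β₂°)` of weights with `β₁° + β₂° = β` such that:
(i) for every pair `(γ₁, γ₂)` of weights with `γ₁ + γ₂ = β` and `(γ₁, γ₂) ≠ (β₁°, β₂°)`,
    `β₁°` is not `≤ γ₁` in the dominance order (`μ ≤ λ` iff `λ - μ` is a nonnegative
    integral combination of simple roots), and
(ii) `β₁° ≠ 0` and `β₂° ≠ 0` (i.e. both are roots). -/
theorem stmt11 (R : RootSystemData V)
    (hirr : R.IsIrreducible) (Pi : Finset V) (hPi : R.IsBase Pi)
    (θ : V) (hθ : R.IsHighest Pi θ)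
    (β : V) (hβ : β ∈ R.Φ) (hβθ : β ≠ θ) (hβθ' : β ≠ -θ) :
    ∃ β₁ β₂ : V, β₁ ∈ R.Φ ∧ β₂ ∈ R.Φ ∧ β₁ + β₂ = β ∧
      ∀ γ₁ γ₂ : V, (γ₁ = 0 ∨ γ₁ ∈ R.Φ) → (γ₂ = 0 ∨ γ₂ ∈ R.Φ) → γ₁ + γ₂ = β →
        (γ₁, γ₂) ≠ (β₁, β₂) →
        ¬ ∃ c : V → ℕ, γ₁ - β₁ = ∑ α ∈ Pi, (c α : ℝ) • α :=
  stmt11_general R Pi hPi θ hθ β hβ hβθ hβθ'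
end
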